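/- If G is an NG-graph, then its complement Ḡ is an NG-graph and the degree-based sets coincide: A_G = A_{Ḡ}, B_G = C_{Ḡ}, and C_G = B_{Ḡ}. Moreover, G is a Type 1 NG-graph if and only if Ḡ is a Type 2 NG-graph, and G is a Type 3 NG-graph if and only if Ḡ is a Type 3 NG-graph. -/
import Mathlib


open SimpleGraph

variable {V : Type*} [Fintype V] [DecidableEq V]

/-- A coloring `f` with `r` colors is distinguishing for `G` if the identity is the
only automorphism of `G` preserving all colors. -/
def IsDistinguishing (G : SimpleGraph V) {r : ℕ} (f : V → Fin r) : Prop :=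
  ∀ φ : G ≃g G, (∀ v, f (φ v) = f v) → ∀ v, φ v = v

/-- A coloring is proper if adjacent vertices receive different colors. -/
def IsProperColoring (G : SimpleGraph V) {r : ℕ} (f : V → Fin r) : Prop :=
  ∀ u v, G.Adj u v → f u ≠ f v

/-- The distinguishing number of `G`: least `r` admitting a distinguishing coloring. -/
noncomputable def distNum (G : SimpleGraph V) : ℕ :=
  sInf {r : ℕ | ∃ f : V → Fin r, IsDistinguishing G f}

/-- The distinguishing chromatic number of `G`: least `r` admitting a proper
distinguishing coloring. -/
noncomputable def distChromNum (G : SimpleGraph V) : ℕ :=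
  sInf {r : ℕ | ∃ f : V → Fin r, IsProperColoring G f ∧ IsDistinguishing G f}

/-- The chromatic number of `G`, as a natural number. -/
noncomputable def chromNat {W : Type*} (G : SimpleGraph W) : ℕ :=
  G.chromaticNumber.toNat

/-- `G` is an NG-graph: `χ(G) + χ(Ḡ) = n + 1`. -/
def IsNG {W : Type*} [Finite W] (G : SimpleGraph W) : Prop :=
  chromNat G + chromNat Gᶜ = Nat.card W + 1

/-- `G` is an NGD-graph: `χ_D(G) + χ_D(Ḡ) = n + D(G)`. -/
noncomputable def IsNGD (G : SimpleGraph V) : Prop :=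
  distChromNum G + distChromNum Gᶜ = Fintype.card V + distNum G

/-- `S` is an independent set of `G`. -/
def IsIndepSet' (G : SimpleGraph V) (S : Set V) : Prop :=
  ∀ u ∈ S, ∀ v ∈ S, ¬ G.Adj u v

/-- The set of vertices of degree `χ(G) - 1`. -/
def setA (G : SimpleGraph V) [DecidableRel G.Adj] : Set V :=
  {v | G.degree v = chromNat G - 1}

/-- The set of vertices of degree greater than `χ(G) - 1`. -/
def setB (G : SimpleGraph V) [DecidableRel G.Adj] : Set V :=
  {v | G.degree v > chromNat G - 1}

/-- The set of vertices of degree less than `χ(G) - 1`. -/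
def setC (G : SimpleGraph V) [DecidableRel G.Adj] : Set V :=
  {v | G.degree v < chromNat G - 1}

/-- An isomorphism of graphs induces an isomorphism of complements. -/
def isoCompl {W X : Type*} {G : SimpleGraph W} {H : SimpleGraph X} (e : G ≃g H) : Gᶜ ≃g Hᶜ :=
  ⟨e.toEquiv, by
    intro a b
    simp [compl_adj, e.map_adj_iff, e.toEquiv.injective.ne_iff]⟩

/-- `C₅` is self-complementary. -/
def c5compl : (cycleGraph 5)ᶜ ≃g cycleGraph 5 :=
  ⟨⟨fun k => 2 * k, fun k => 3 * k, by decide, by decide⟩, by decide⟩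

lemma induce_compl_eq {W : Type*} (G : SimpleGraph W) (S : Set W) :
    Gᶜ.induce S = (G.induce S)ᶜ := by
  ext a b
  simp [compl_adj, Subtype.ext_iff]

lemma chromNat_le_card (G : SimpleGraph V) : chromNat G ≤ Fintype.card V := by
  have h := G.colorable_of_fintype.chromaticNumber_le
  simpa [chromNat] using ENat.toNat_le_toNat h (by simp)

/-- If `G` is an NG-graph then so is `Ḡ`, with `A_G = A_{Ḡ}`, `B_G = C_{Ḡ}`,
`C_G = B_{Ḡ}`; moreover `G` is Type 1 iff `Ḡ` is Type 2, and `G` is Type 3 iff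
`Ḡ` is Type 3. -/
theorem stmt16 (G : SimpleGraph V) [DecidableRel G.Adj] (hNG : IsNG G) :
    IsNG Gᶜ ∧
      setA G = setA Gᶜ ∧ setB G = setC Gᶜ ∧ setC G = setB Gᶜ ∧
      (G.IsClique (setA G) ↔ IsIndepSet' Gᶜ (setA Gᶜ)) ∧
      (Nonempty (G.induce (setA G) ≃g cycleGraph 5) ↔
        Nonempty (Gᶜ.induce (setA Gᶜ) ≃g cycleGraph 5)) := by
  classical
  have h1 : chromNat G ≤ Fintype.card V := chromNat_le_card G
  have h2 : chromNat Gᶜ ≤ Fintype.card V := chromNat_le_card Gᶜ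
  have n1 : chromNat G + chromNat Gᶜ = Fintype.card V + 1 := by
    have := hNG
    rwa [IsNG, Nat.card_eq_fintype_card] at this
  have hA : setA G = setA Gᶜ := by
    ext v
    have hd : Gᶜ.degree v = Fintype.card V - 1 - G.degree v := degree_compl G v
    have hlt : G.degree v < Fintype.card V := G.degree_lt_card_verts v
    simp only [setA, Set.mem_setOf_eq]
    omega
  refine ⟨?_, hA, ?_, ?_, ?_, ?_⟩
  · rw [IsNG, compl_compl, Nat.card_eq_fintype_card]
    omega
  · ext v
    have hd : Gᶜ.degree v = Fintype.card V - 1 - G.degree v := degree_compl G v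
    have hlt : G.degree v < Fintype.card V := G.degree_lt_card_verts v
    simp only [setB, setC, Set.mem_setOf_eq]
    omega
  · ext v
    have hd : Gᶜ.degree v = Fintype.card V - 1 - G.degree v := degree_compl G v
    have hlt : G.degree v < Fintype.card V := G.degree_lt_card_verts v
    simp only [setB, setC, Set.mem_setOf_eq]
    omega
  · rw [← hA]
    constructor
    · intro h u hu v hv hadj
      exact ((G.compl_adj u v).mp hadj).2 (h hu hv ((G.compl_adj u v).mp hadj).1)
    · intro h u hu v hv hne
      by_contra hn
      exact h u hu v hv ((G.compl_adj u v).mpr ⟨hne, hn⟩)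
  · rw [← hA, induce_compl_eq]
    constructor
    · rintro ⟨e⟩
      exact ⟨(isoCompl e).trans c5compl⟩
    · rintro ⟨e⟩
      have e2 := (isoCompl e).trans c5compl
      rw [compl_compl] at e2
      exact ⟨e2⟩
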